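/- arXiv:2405.08811 — 5 statements merged into one kernel-verified Lean document; each statement's English description precedes it below -/
import Mathlib

section
/- Let Φ : [1,∞) → (0,∞) be strictly decreasing with t ↦ Φ(t) log t strictly increasing, and define φ(t) := t^(1+Φ(t)). Then for every α > 0 and every M > 1 there exists t* > 1 such that φ(t+α) ≤ M·φ(t) for all t > t*. In fact any t* > α/(M^(1/(1+Φ(1))) − 1) works. -/
open Real Filter Set

theorem stmt3 (Φ : ℝ → ℝ)
    (hpos : ∀ t ≥ (1:ℝ), 0 < Φ t)
    (hanti : StrictAntiOn Φ (Ici 1))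
    (hmono : StrictMonoOn (fun t => Φ t * Real.log t) (Ici 1)) :
    ∀ α > (0:ℝ), ∀ M > (1:ℝ), ∀ tstar > (1:ℝ),
      tstar > α / (M ^ ((1:ℝ) / (1 + Φ 1)) - 1) →
      ∀ t > tstar, (t + α) ^ (1 + Φ (t + α)) ≤ M * t ^ (1 + Φ t) := by
  intro α hα M hM tstar htstar hts t ht
  have hΦ1 : 0 < Φ 1 := hpos 1 le_rfl
  have hp1 : (0:ℝ) < 1 + Φ 1 := by linarith
  set c : ℝ := M ^ ((1:ℝ) / (1 + Φ 1)) with hc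
  have hc1 : 1 < c := by
    rw [hc]
    exact Real.one_lt_rpow_iff_of_pos (by linarith) |>.mpr (Or.inl ⟨hM, by positivity⟩)
  have ht1 : (1:ℝ) < t := lt_trans htstar ht
  have ht0 : (0:ℝ) < t := by linarith
  have hta1 : (1:ℝ) < t + α := by linarith
  have htmem : t ∈ Ici (1:ℝ) := le_of_lt ht1
  have htamem : t + α ∈ Ici (1:ℝ) := le_of_lt hta1
  have hΦlt : Φ (t + α) < Φ t := hanti htmem htamem (by linarith)
  have hΦlt1 : Φ (t + α) < Φ 1 := hanti (le_refl (1:ℝ) : (1:ℝ) ∈ Ici 1) htamem hta1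
  have hΦta : 0 < Φ (t + α) := hpos _ (le_of_lt hta1)
  -- 1 + α/t ≤ c
  have hcα : α / (c - 1) < t := lt_trans hts ht
  have hdiv : 1 + α / t ≤ c := by
    have h1 : α / (c - 1) < t := hcα
    have h2 : α < t * (c - 1) := (div_lt_iff₀ (by linarith)).mp h1
    have : α / t < c - 1 := (div_lt_iff₀ ht0).mpr (by linarith [mul_comm t (c-1)])
    linarith
  have hsplit : t + α = t * (1 + α / t) := by field_simp
  set p : ℝ := 1 + Φ (t + α) with hpdef
  have hp0 : 0 < p := by dsimp [p]; linarith
  have key : (t + α) ^ p = t ^ p * (1 + α / t) ^ p := by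
    rw [hsplit, Real.mul_rpow (le_of_lt ht0) (by positivity)]
  have h3 : t ^ p ≤ t ^ (1 + Φ t) :=
    Real.rpow_le_rpow_of_exponent_le (le_of_lt ht1) (by dsimp [p]; linarith)
  have h4 : (1 + α / t) ^ p ≤ (1 + α / t) ^ (1 + Φ 1) :=
    Real.rpow_le_rpow_of_exponent_le (by have := div_pos hα ht0; linarith) (by dsimp [p]; linarith)
  have h5 : (1 + α / t) ^ (1 + Φ 1) ≤ c ^ (1 + Φ 1) :=
    Real.rpow_le_rpow (by positivity) hdiv (le_of_lt hp1)
  have h6 : c ^ (1 + Φ 1) = M := by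
    rw [hc, ← Real.rpow_mul (by linarith : (0:ℝ) ≤ M), one_div,
      inv_mul_cancel₀ (ne_of_gt hp1), Real.rpow_one]
  calc (t + α) ^ p = t ^ p * (1 + α / t) ^ p := key
    _ ≤ t ^ (1 + Φ t) * M := by
        apply mul_le_mul h3 (by linarith [h4, h5, h6]) (by positivity) (by positivity)
    _ = M * t ^ (1 + Φ t) := mul_comm _ _
end

section
/- Let Φ : [1,∞) → (0,∞) be strictly decreasing with Φ(t) → 0 and Φ(t) log t → ∞ as t → ∞, and let φ(t) := t^(1+Φ(t)), which is a strictly increasing bijection onto its range for large t. Then for every M > 1 there exists w₀ such that for all w > w₀ (in the range of φ): w^(1 − M·Φ(w)) ≤ φ⁻¹(w) ≤ w^(1 − Φ(w)/M). -/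
open Real Filter Set

theorem stmt5 (Φ g : ℝ → ℝ)
    (hpos : ∀ t ≥ (1:ℝ), 0 < Φ t)
    (hanti : StrictAntiOn Φ (Ici 1))
    (hlim : Tendsto Φ atTop (nhds 0))
    (hmono : StrictMonoOn (fun t => Φ t * Real.log t) (Ici 1))
    (hlim2 : Tendsto (fun t => Φ t * Real.log t) atTop atTop)
    (hg : ∀ t ≥ (1:ℝ), g (t ^ (1 + Φ t)) = t) :
    ∀ M > (1:ℝ), ∃ w₀ : ℝ, ∀ w > w₀, (∃ t ≥ (1:ℝ), t ^ (1 + Φ t) = w) →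
      w ^ (1 - M * Φ w) ≤ g w ∧ g w ≤ w ^ (1 - Φ w / M) := by
  intro M hM
  have h1 : (0:ℝ) < M - 1 := by linarith
  obtain ⟨t₀, ht₀⟩ := eventually_atTop.mp (hlim.eventually_lt_const h1)
  set t₁ : ℝ := max t₀ 1 with ht₁def
  have ht₁1 : (1:ℝ) ≤ t₁ := le_max_right _ _
  have hΦ1 : 0 < Φ 1 := hpos 1 le_rfl
  refine ⟨max 1 (t₁ ^ (1 + Φ 1)), fun w hw ⟨t, ht1, htw⟩ => ?_⟩
  have hw1 : 1 < w := lt_of_le_of_lt (le_max_left _ _) hw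
  have hΦt : 0 < Φ t := hpos t ht1
  have htt₁ : t₁ < t := by
    by_contra h
    push_neg at h
    have hΦle : Φ t ≤ Φ 1 :=
      hanti.antitoneOn (self_mem_Ici) (mem_Ici.mpr ht1) ht1
    have hle : w ≤ t₁ ^ (1 + Φ 1) := by
      calc w = t ^ (1 + Φ t) := htw.symm
        _ ≤ t₁ ^ (1 + Φ t) := Real.rpow_le_rpow (by linarith) h (by linarith)
        _ ≤ t₁ ^ (1 + Φ 1) := Real.rpow_le_rpow_of_exponent_le ht₁1 (by linarith)
    have := lt_of_le_of_lt (le_max_right 1 (t₁ ^ (1 + Φ 1))) hw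
    linarith
  have ht1' : 1 < t := lt_of_le_of_lt ht₁1 htt₁
  have hΦtM : Φ t < M - 1 := ht₀ t (le_of_lt (lt_of_le_of_lt (le_max_left _ _) htt₁))
  have htw' : t ≤ w := by
    rw [← htw]
    nth_rewrite 1 [← Real.rpow_one t]
    exact Real.rpow_le_rpow_of_exponent_le (le_of_lt ht1') (by linarith)
  have hw0 : (0:ℝ) < w := by linarith
  have hΦw : 0 < Φ w := hpos w (by linarith)
  have hwt : Φ w ≤ Φ t :=
    hanti.antitoneOn (mem_Ici.mpr ht1) (mem_Ici.mpr (by linarith)) htw'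
  have hlogt : 0 < Real.log t := Real.log_pos ht1'
  have hlogw : Real.log w = (1 + Φ t) * Real.log t := by
    rw [← htw, Real.log_rpow (by linarith)]
  have hmono' : Φ t * Real.log t ≤ Φ w * Real.log w :=
    hmono.monotoneOn (mem_Ici.mpr ht1) (mem_Ici.mpr (by linarith)) htw'
  have hkey : Φ t ≤ Φ w * (1 + Φ t) := by
    rw [hlogw] at hmono'
    nlinarith
  have hgw : g w = t := by rw [← htw, hg t ht1]
  have hpt : 0 < 1 + Φ t := by linarith
  have hwe : w ^ (1 / (1 + Φ t)) = t := by
    rw [← htw, ← Real.rpow_mul (by linarith : (0:ℝ) ≤ t),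
      mul_one_div_cancel (ne_of_gt hpt), Real.rpow_one]
  have hM0 : (0:ℝ) < M := by linarith
  constructor
  · rw [hgw, ← hwe]
    apply Real.rpow_le_rpow_of_exponent_le (le_of_lt hw1)
    rw [le_div_iff₀ hpt]
    nlinarith [mul_pos hΦw hΦt]
  · rw [hgw, ← hwe]
    apply Real.rpow_le_rpow_of_exponent_le (le_of_lt hw1)
    rw [div_le_iff₀ hpt]
    have key2 : Φ w * (1 + Φ t) ≤ M * Φ t := by nlinarith
    have hdiv : Φ w / M * (1 + Φ t) ≤ Φ t := by
      rw [div_mul_eq_mul_div, div_le_iff₀ hM0]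
      nlinarith
    nlinarith
end

section
/- Let Φ : [1,∞) → (0,∞) satisfy the standing assumptions (strictly decreasing, Φ(t) → 0, Φ(t) log t strictly increasing to ∞) together with Φ(t²)/Φ(t) → 1 as t → ∞. Let φ(t) := t^(1+Φ(t)), and let Ψ : [e,∞) → (0,∞) satisfy Ψ(t)/Φ(t) → 0 as t → ∞, with ψ(t) := t^(1+Ψ(t)). Then for every γ > 1 one has φ(ψ(t)) = O(t^(1 + γ·Φ(t))) as t → ∞. -/
open Real Filter Set Asymptotics

theorem stmt6 (Φ Ψ : ℝ → ℝ)
    (hpos : ∀ t ≥ (1:ℝ), 0 < Φ t)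
    (hanti : StrictAntiOn Φ (Ici 1))
    (hlim : Tendsto Φ atTop (nhds 0))
    (hmono : StrictMonoOn (fun t => Φ t * Real.log t) (Ici 1))
    (hlim2 : Tendsto (fun t => Φ t * Real.log t) atTop atTop)
    (hreg : Tendsto (fun t => Φ (t ^ (2:ℝ)) / Φ t) atTop (nhds 1))
    (hΨpos : ∀ t ≥ Real.exp 1, 0 < Ψ t)
    (hratio : Tendsto (fun t => Ψ t / Φ t) atTop (nhds 0)) :
    ∀ γ > (1:ℝ),
      (fun t : ℝ => (t ^ (1 + Ψ t)) ^ (1 + Φ (t ^ (1 + Ψ t))))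
        =O[atTop] (fun t : ℝ => t ^ (1 + γ * Φ t)) := by
  intro γ hγ
  apply IsBigO.of_bound 1
  have h1 : ∀ᶠ t in atTop, Ψ t / Φ t < (γ - 1) / 2 :=
    hratio.eventually (gt_mem_nhds (by linarith))
  have h2 : ∀ᶠ t in atTop, Φ t < 1 := hlim.eventually (gt_mem_nhds one_pos)
  have h3 : ∀ᶠ t : ℝ in atTop, Real.exp 1 ≤ t := eventually_ge_atTop _
  have h4 : ∀ᶠ t : ℝ in atTop, (1:ℝ) ≤ t := eventually_ge_atTop _
  filter_upwards [h1, h2, h3, h4] with t h1 h2 h3 h4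
  have hΦt : 0 < Φ t := hpos t h4
  have hΨt : 0 < Ψ t := hΨpos t h3
  have hΨle : Ψ t ≤ (γ - 1) / 2 * Φ t := by
    have := (div_lt_iff₀ hΦt).mp h1
    linarith
  set s := t ^ (1 + Ψ t) with hs
  have hts : t ≤ s := by
    calc t = t ^ (1:ℝ) := (Real.rpow_one t).symm
    _ ≤ t ^ (1 + Ψ t) := Real.rpow_le_rpow_of_exponent_le h4 (by linarith)
  have hs1 : (1:ℝ) ≤ s := le_trans h4 hts
  have hΦs : Φ s ≤ Φ t := hanti.antitoneOn h4 hs1 hts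
  have hΦs0 : 0 < Φ s := hpos s hs1
  have key : s ^ (1 + Φ s) ≤ t ^ (1 + γ * Φ t) := by
    rw [hs, ← Real.rpow_mul (by linarith : (0:ℝ) ≤ t)]
    apply Real.rpow_le_rpow_of_exponent_le h4
    nlinarith
  have h0s : 0 ≤ s ^ (1 + Φ s) := Real.rpow_nonneg (by linarith) _
  have h0t : 0 ≤ t ^ (1 + γ * Φ t) := Real.rpow_nonneg (by linarith) _
  simp only [Real.norm_eq_abs, abs_of_nonneg h0s, abs_of_nonneg h0t, one_mul]
  exact key
end

section
/- Let Φ satisfy the standing assumptions with φ(t) := t^(1+Φ(t)), and let sequences (r_j), (R_j) satisfy log r_{j+1} = φ(R_j) − 1 and log R_{j+1} = φ(R_j) + 9 R_j. Define Ψ(t) := 10·φ⁻¹(log t)/log t and ψ(t) := t^(1+Ψ(t)). Then R_j ≤ ψ(r_j) for all sufficiently large j. -/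
open Real Filter Set

theorem stmt17 (Φ g : ℝ → ℝ)
    (hpos : ∀ t ≥ (1:ℝ), 0 < Φ t)
    (hanti : StrictAntiOn Φ (Ici 1))
    (hlim : Tendsto Φ atTop (nhds 0))
    (hmono : StrictMonoOn (fun t => Φ t * Real.log t) (Ici 1))
    (hlim2 : Tendsto (fun t => Φ t * Real.log t) atTop atTop)
    (hg : ∀ t ≥ (1:ℝ), g (t ^ (1 + Φ t)) = t)
    (r R : ℕ → ℝ)
    (hr1 : ∀ j, 1 < r j) (hR1 : ∀ j, 1 < R j)
    (hrec_r : ∀ j, Real.log (r (j + 1)) = R j ^ (1 + Φ (R j)) - 1)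
    (hrec_R : ∀ j, Real.log (R (j + 1)) = R j ^ (1 + Φ (R j)) + 9 * R j)
    (hrtop : Tendsto r atTop atTop) :
    ∀ᶠ j in atTop,
      R j ≤ (r j) ^ (1 + 10 * g (Real.log (r j)) / Real.log (r j)) := by
  have hΦ0 : ∀ t ≥ (1:ℝ), 0 ≤ Φ t := fun t ht => (hpos t ht).le
  set f : ℝ → ℝ := fun t => Φ t * Real.log t with hf_def
  set L : ℝ → ℝ := fun t => (1 + Φ t) * Real.log t with hL_def
  -- two-sided Lipschitz-type bound for f
  have hf_lip : ∀ a b : ℝ, 1 ≤ a → a ≤ b →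
      f a ≤ f b ∧ f b - f a ≤ Φ 1 * (Real.log b - Real.log a) := by
    intro a b ha hab
    have hb : (1:ℝ) ≤ b := ha.trans hab
    constructor
    · rcases eq_or_lt_of_le hab with rfl | h
      · exact le_refl _
      · exact (hmono (mem_Ici.2 ha) (mem_Ici.2 hb) h).le
    · have h1 : Φ b ≤ Φ a := by
        rcases eq_or_lt_of_le hab with rfl | h
        · exact le_refl _
        · exact (hanti (mem_Ici.2 ha) (mem_Ici.2 hb) h).le
      have h2 : Φ a ≤ Φ 1 := by
        rcases eq_or_lt_of_le ha with rfl | h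
        · exact le_refl _
        · exact (hanti (mem_Ici.2 (le_refl 1)) (mem_Ici.2 ha) h).le
      have hla : 0 ≤ Real.log a := Real.log_nonneg ha
      have hlb : 0 ≤ Real.log b := Real.log_nonneg hb
      have hlab : Real.log a ≤ Real.log b :=
        Real.log_le_log (lt_of_lt_of_le one_pos ha) hab
      simp only [hf_def]
      nlinarith
  have hf_cont : ContinuousOn f (Ici (1:ℝ)) := by
    intro x hx
    have hx1 : (1:ℝ) ≤ x := hx
    have hx0 : (0:ℝ) < x := lt_of_lt_of_le one_pos hx1
    rw [ContinuousWithinAt, tendsto_iff_dist_tendsto_zero]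
    have hbound : ∀ t ∈ Ici (1:ℝ),
        dist (f t) (f x) ≤ Φ 1 * dist (Real.log t) (Real.log x) := by
      intro t ht
      have ht1 : (1:ℝ) ≤ t := ht
      rcases le_total t x with h | h
      · have h' := hf_lip t x ht1 h
        rw [Real.dist_eq, Real.dist_eq, abs_of_nonpos (by linarith [h'.1]),
          abs_of_nonpos (by linarith [Real.log_le_log (by linarith) h])]
        linarith [h'.2]
      · have h' := hf_lip x t hx1 h
        rw [Real.dist_eq, Real.dist_eq, abs_of_nonneg (by linarith [h'.1]),
          abs_of_nonneg (by linarith [Real.log_le_log (by linarith) h])]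
        linarith [h'.2]
    have hlog : Tendsto (fun t => Real.log t) (nhdsWithin x (Ici 1)) (nhds (Real.log x)) :=
      (Real.continuousAt_log (ne_of_gt hx0)).continuousWithinAt
    have hzero : Tendsto (fun t => Φ 1 * dist (Real.log t) (Real.log x))
        (nhdsWithin x (Ici 1)) (nhds 0) := by
      have h1 : Tendsto (fun t => dist (Real.log t) (Real.log x))
          (nhdsWithin x (Ici 1)) (nhds 0) := by
        have := hlog.dist (tendsto_const_nhds (x := Real.log x))
        simpa using this
      simpa using h1.const_mul (Φ 1)
    exact squeeze_zero' (Filter.Eventually.of_forall fun t => dist_nonneg)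
      (eventually_nhdsWithin_of_forall hbound) hzero
  have hL_cont : ContinuousOn L (Ici (1:ℝ)) := by
    have h1 : ContinuousOn (fun t => Real.log t + f t) (Ici (1:ℝ)) := by
      refine ContinuousOn.add ?_ hf_cont
      intro t ht
      exact (Real.continuousAt_log (ne_of_gt (lt_of_lt_of_le one_pos ht))).continuousWithinAt
    refine h1.congr ?_
    intro t _
    simp only [hL_def, hf_def]
    ring
  -- strict monotonicity of L
  have hLlt : ∀ a b : ℝ, 1 ≤ a → 1 ≤ b → a < b → L a < L b := by
    intro a b ha hb hab
    have h1 : f a < f b := hmono (mem_Ici.2 ha) (mem_Ici.2 hb) hab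
    have h2 : Real.log a < Real.log b := Real.log_lt_log (lt_of_lt_of_le one_pos ha) hab
    have e1 : L a = Real.log a + f a := by simp only [hL_def, hf_def]; ring
    have e2 : L b = Real.log b + f b := by simp only [hL_def, hf_def]; ring
    linarith
  have hφexp : ∀ x : ℝ, 0 < x → x ^ (1 + Φ x) = Real.exp (L x) := by
    intro x hx
    rw [Real.rpow_def_of_pos hx]
    congr 1
    simp only [hL_def]
    ring
  -- surjectivity of φ onto [1,∞)
  have hsurj : ∀ s : ℝ, 1 ≤ s → ∃ t, 1 ≤ t ∧ t ^ (1 + Φ t) = s := by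
    intro s hs
    have hls : 0 ≤ Real.log s := Real.log_nonneg hs
    obtain ⟨T, hT⟩ :=
      ((hlim2.eventually_ge_atTop (Real.log s)).and (eventually_ge_atTop (1:ℝ))).exists
    have hT1 : (1:ℝ) ≤ T := hT.2
    have hLT : Real.log s ≤ L T := by
      have hlT : 0 ≤ Real.log T := Real.log_nonneg hT1
      have h1 : Real.log s ≤ Φ T * Real.log T := hT.1
      simp only [hL_def]
      nlinarith
    have hL1 : L 1 = 0 := by simp [hL_def]
    have hivt := intermediate_value_Icc hT1 (hL_cont.mono Icc_subset_Ici_self)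
    have hmem : Real.log s ∈ Icc (L 1) (L T) := by rw [hL1]; exact ⟨hls, hLT⟩
    obtain ⟨t, htmem, htL⟩ := hivt hmem
    refine ⟨t, htmem.1, ?_⟩
    rw [hφexp t (lt_of_lt_of_le one_pos htmem.1), htL, Real.exp_log (by linarith)]
  -- threshold
  set S : ℝ := max 18 ((2:ℝ) ^ (1 + Φ 1) + 1) with hS_def
  have hS18 : (18:ℝ) ≤ S := le_max_left _ _
  have hSφ2 : (2:ℝ) ^ (1 + Φ 1) + 1 ≤ S := le_max_right _ _
  have hev := hrtop.eventually_ge_atTop (Real.exp S)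
  rw [eventually_atTop] at hev ⊢
  obtain ⟨N, hN⟩ := hev
  refine ⟨N + 1, fun j hj => ?_⟩
  obtain ⟨k, rfl⟩ : ∃ k, j = k + 1 := ⟨j - 1, by omega⟩
  have hrk : Real.exp S ≤ r (k + 1) := hN _ (by omega)
  have hrpos : (0:ℝ) < r (k + 1) := lt_trans one_pos (hr1 _)
  set s : ℝ := Real.log (r (k + 1)) with hs_def
  have hsS : S ≤ s := by
    have := (Real.le_log_iff_exp_le hrpos).2 hrk
    exact this
  have hs18 : (18:ℝ) ≤ s := le_trans hS18 hsS
  have hspos : (0:ℝ) < s := by linarith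
  -- facts about u = R k
  have hu1 : (1:ℝ) ≤ R k := (hR1 k).le
  have hu0 : (0:ℝ) < R k := lt_of_lt_of_le one_pos hu1
  have hu : R k ^ (1 + Φ (R k)) = s + 1 := by
    have := hrec_r k; rw [← hs_def] at this; linarith
  have hLu : L (R k) = Real.log (s + 1) := by
    have h0 : Real.exp (L (R k)) = s + 1 := by rw [← hφexp (R k) hu0]; exact hu
    rw [← h0, Real.log_exp]
  -- t with φ t = s
  obtain ⟨t, ht1, hφt⟩ := hsurj s (by linarith)
  have ht0 : (0:ℝ) < t := lt_of_lt_of_le one_pos ht1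
  have hgt : g s = t := by
    have := hg t ht1
    rw [hφt] at this
    exact this
  have hLt : L t = Real.log s := by
    have h0 : Real.exp (L t) = s := by rw [← hφexp t ht0]; exact hφt
    rw [← h0, Real.log_exp]
  -- t < R k
  have hlog_lt : Real.log s < Real.log (s + 1) := Real.log_lt_log hspos (by linarith)
  have htu : t < R k := by
    by_contra h
    push_neg at h
    rcases eq_or_lt_of_le h with h' | h'
    · rw [h'] at hLu; rw [hLu] at hLt; linarith
    · have := hLlt (R k) t hu1 ht1 h'
      rw [hLu, hLt] at this; linarith
  -- t ≤ s
  have hts : t ≤ s := by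
    have h1 : Real.log t ≤ L t := by
      have hlt : 0 ≤ Real.log t := Real.log_nonneg ht1
      have hΦt : 0 ≤ Φ t := hΦ0 t ht1
      simp only [hL_def]
      nlinarith
    have h2 : Real.log t ≤ Real.log s := by rw [← hLt]; exact h1
    calc t = Real.exp (Real.log t) := (Real.exp_log ht0).symm
      _ ≤ Real.exp (Real.log s) := Real.exp_le_exp.2 h2
      _ = s := Real.exp_log hspos
  -- 2 < t
  have h2t : (2:ℝ) < t := by
    by_contra h
    push_neg at h
    have hΦ21 : Φ 2 ≤ Φ 1 :=
      (hanti (mem_Ici.2 (le_refl 1)) (mem_Ici.2 one_le_two) one_lt_two).le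
    have hφ2 : (2:ℝ) ^ (1 + Φ 2) ≤ 2 ^ (1 + Φ 1) :=
      Real.rpow_le_rpow_of_exponent_le one_le_two (by linarith)
    have hLt2 : L t ≤ L 2 := by
      rcases eq_or_lt_of_le h with h' | h'
      · rw [h']
      · exact (hLlt t 2 ht1 one_le_two h').le
    have hs_le : s ≤ (2:ℝ) ^ (1 + Φ 2) := by
      calc s = Real.exp (L t) := by rw [hLt, Real.exp_log hspos]
        _ ≤ Real.exp (L 2) := Real.exp_le_exp.2 hLt2
        _ = (2:ℝ) ^ (1 + Φ 2) := (hφexp 2 two_pos).symm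
    linarith [hSφ2, hsS]
  -- key bound : log (R k) ≤ log t + (log (s+1) - log s)
  have hfle : f t < f (R k) := hmono (mem_Ici.2 ht1) (mem_Ici.2 hu1) htu
  have hkey : Real.log (R k) ≤ Real.log t + (Real.log (s + 1) - Real.log s) := by
    have e1 : Real.log (R k) + f (R k) = Real.log (s + 1) := by
      have : L (R k) = Real.log (R k) + f (R k) := by simp only [hL_def, hf_def]; ring
      rw [← this, hLu]
    have e2 : Real.log t + f t = Real.log s := by
      have : L t = Real.log t + f t := by simp only [hL_def, hf_def]; ring
      rw [← this, hLt]
    linarith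
  have hRle : R k ≤ t * ((s + 1) / s) := by
    have hrhs : (0:ℝ) < t * ((s + 1) / s) := by positivity
    have hlogrhs : Real.log (t * ((s + 1) / s)) =
        Real.log t + (Real.log (s + 1) - Real.log s) := by
      rw [Real.log_mul (ne_of_gt ht0) (ne_of_gt (by positivity)),
        Real.log_div (by linarith) (ne_of_gt hspos)]
    calc R k = Real.exp (Real.log (R k)) := (Real.exp_log hu0).symm
      _ ≤ Real.exp (Real.log (t * ((s + 1) / s))) := by
          apply Real.exp_le_exp.2
          rw [hlogrhs]; exact hkey
      _ = t * ((s + 1) / s) := Real.exp_log hrhs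
  have hRks : R k * s ≤ t * s + t := by
    have := mul_le_mul_of_nonneg_right hRle hspos.le
    have he : t * ((s + 1) / s) * s = t * s + t := by field_simp
    linarith [he ▸ this]
  have harith : 1 + 9 * R k ≤ 10 * t := by
    nlinarith [mul_nonneg (by linarith : (0:ℝ) ≤ s - 18) (by linarith : (0:ℝ) ≤ t),
      mul_nonneg (by linarith : (0:ℝ) ≤ t - 2) (by linarith : (0:ℝ) ≤ s)]
  -- conclusion
  have hlogR : Real.log (R (k + 1)) = s + 1 + 9 * R k := by
    have := hrec_R k; rw [hu] at this; linarith
  have hfinal : Real.log (R (k + 1)) ≤ s + 10 * g s := by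
    rw [hlogR, hgt]; linarith
  rw [Real.rpow_def_of_pos hrpos, ← hs_def]
  calc R (k + 1) = Real.exp (Real.log (R (k + 1))) :=
        (Real.exp_log (lt_trans one_pos (hR1 (k + 1)))).symm
    _ ≤ Real.exp (s * (1 + 10 * g s / s)) := by
        apply Real.exp_le_exp.2
        have he : s * (1 + 10 * g s / s) = s + 10 * g s := by field_simp
        rw [he]; exact hfinal
end

section
/- Let Θ be a positive decreasing function with Θ(t) → 0 such that Θ(t) log t is increasing to ∞, Θ(t²)/Θ(t) → 1, and for some β ∈ (0,1), (log t)^(β·Θ(log t))·Θ(t) → ∞ as t → ∞. Fix ε > 0 small and set Φ(t) := (1−ε)·Θ(t), φ(t) := t^(1+Φ(t)), and Ψ(t) := 10·φ⁻¹(log t)/log t. Then, for ε sufficiently small, Ψ(t)/Φ(t) → 0 as t → ∞. -/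
open Real Filter Set

set_option maxHeartbeats 1000000 in
theorem stmt19 (Θ : ℝ → ℝ) (t₀ : ℝ) (ht₀ : 1 < t₀)
    (hpos : ∀ t ≥ t₀, 0 < Θ t)
    (hanti : AntitoneOn Θ (Ici t₀))
    (hlim : Tendsto Θ atTop (nhds 0))
    (hmono : StrictMonoOn (fun t => Θ t * Real.log t) (Ici t₀))
    (hlim2 : Tendsto (fun t => Θ t * Real.log t) atTop atTop)
    (hreg : Tendsto (fun t => Θ (t ^ (2:ℝ)) / Θ t) atTop (nhds 1))
    (β : ℝ) (hβ : 0 < β) (hβ1 : β < 1)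
    (hderyck : Tendsto (fun t => (Real.log t) ^ (β * Θ (Real.log t)) * Θ t)
      atTop atTop) :
    ∃ ε₀ > (0:ℝ), ∀ ε, 0 < ε → ε ≤ ε₀ →
      ∀ g : ℝ → ℝ, (∀ t ≥ t₀, g (t ^ (1 + (1 - ε) * Θ t)) = t) →
      Tendsto (fun t => (10 * g (Real.log t) / Real.log t) / ((1 - ε) * Θ t))
        atTop (nhds 0) := by
  -- continuity of Θ on (t₀, ∞)
  have hcont : ContinuousOn Θ (Ioi t₀) := by
    intro a ha
    have ha' : t₀ < a := ha
    have ha1 : 1 < a := ht₀.trans ha'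
    have hla : 0 < Real.log a := Real.log_pos ha1
    have key : ∀ x ∈ Ioi t₀,
        Θ x ∈ Icc (min (Θ a) (Θ a * (Real.log a / Real.log x)))
          (max (Θ a) (Θ a * (Real.log a / Real.log x))) := by
      intro x hx
      have hx' : t₀ < x := hx
      have hx1 : 1 < x := ht₀.trans hx'
      have hlx : 0 < Real.log x := Real.log_pos hx1
      rcases le_total x a with h | h
      · have h1 : Θ a ≤ Θ x := hanti hx'.le ha'.le h
        have h2 : Θ x * Real.log x ≤ Θ a * Real.log a := by
          rcases eq_or_lt_of_le h with rfl | h'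
          · exact le_rfl
          · exact (hmono hx'.le ha'.le h').le
        have h3 : Θ x ≤ Θ a * (Real.log a / Real.log x) := by
          rw [← mul_div_assoc, le_div_iff₀ hlx]; exact h2
        exact ⟨le_trans (min_le_left _ _) h1, le_trans h3 (le_max_right _ _)⟩
      · have h1 : Θ x ≤ Θ a := hanti ha'.le hx'.le h
        have h2 : Θ a * Real.log a ≤ Θ x * Real.log x := by
          rcases eq_or_lt_of_le h with rfl | h'
          · exact le_rfl
          · exact (hmono ha'.le hx'.le h').le
        have h3 : Θ a * (Real.log a / Real.log x) ≤ Θ x := by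
          rw [← mul_div_assoc, div_le_iff₀ hlx]; exact h2
        exact ⟨le_trans (min_le_right _ _) h3, le_trans h1 (le_max_left _ _)⟩
    have hlog : Tendsto (fun x : ℝ => Real.log x) (nhdsWithin a (Ioi t₀))
        (nhds (Real.log a)) :=
      ((Real.continuousAt_log (by linarith : a ≠ 0)).continuousWithinAt)
    have hd : Tendsto (fun x : ℝ => Real.log a / Real.log x)
        (nhdsWithin a (Ioi t₀)) (nhds 1) := by
      have h := (tendsto_const_nhds (x := Real.log a)
        (f := nhdsWithin a (Ioi t₀))).div hlog hla.ne'
      rwa [div_self hla.ne'] at h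
    have haux : Tendsto (fun x : ℝ => Θ a * (Real.log a / Real.log x))
        (nhdsWithin a (Ioi t₀)) (nhds (Θ a)) := by
      have h := hd.const_mul (Θ a)
      rwa [mul_one] at h
    have hmin : Tendsto (fun x : ℝ => min (Θ a) (Θ a * (Real.log a / Real.log x)))
        (nhdsWithin a (Ioi t₀)) (nhds (Θ a)) := by
      have h := (tendsto_const_nhds (x := Θ a)
        (f := nhdsWithin a (Ioi t₀))).min haux
      rwa [min_self] at h
    have hmax : Tendsto (fun x : ℝ => max (Θ a) (Θ a * (Real.log a / Real.log x)))
        (nhdsWithin a (Ioi t₀)) (nhds (Θ a)) := by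
      have h := (tendsto_const_nhds (x := Θ a)
        (f := nhdsWithin a (Ioi t₀))).max haux
      rwa [max_self] at h
    refine tendsto_of_tendsto_of_tendsto_of_le_of_le' hmin hmax ?_ ?_
    · exact eventually_mem_nhdsWithin.mono fun x hx => (key x hx).1
    · exact eventually_mem_nhdsWithin.mono fun x hx => (key x hx).2
  refine ⟨(1 - β) / 2, by linarith, ?_⟩
  intro ε hε hεle g hg
  have h1ε : 0 < 1 - ε := by linarith
  set t₁ : ℝ := t₀ + 1 with ht₁def
  have ht₁ : t₀ < t₁ := by linarith
  have ht₁1 : 1 < t₁ := by linarith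
  have hΘt₁pos : 0 < Θ t₁ := hpos t₁ ht₁.le
  set C₀ : ℝ := Θ t₁ with hC₀def
  have h1C₀ : (0:ℝ) < 1 + C₀ := by linarith
  set c : ℝ := (1 - β) / (2 * β) with hcdef
  have hc : 0 < c := div_pos (by linarith) (by linarith)
  have hcβ : c * β = (1 - β) / 2 := by rw [hcdef]; field_simp
  obtain ⟨S₁', hS₁'⟩ := eventually_atTop.mp (hlim.eventually (gt_mem_nhds hc))
  set S₁ : ℝ := max S₁' 1 with hS₁def
  have hS₁1 : (1:ℝ) ≤ S₁ := le_max_right _ _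
  -- solvability of s ^ (1 + (1-ε) Θ s) = w for large w
  have hF : ∀ w, max (t₁ ^ (1 + (1 - ε) * Θ t₁)) t₁ ≤ w →
      ∃ s, t₁ ≤ s ∧ s ^ (1 + (1 - ε) * Θ s) = w := by
    intro w hw
    have hwt₁ : t₁ ≤ w := le_trans (le_max_right _ _) hw
    have hsub : Icc t₁ w ⊆ Ioi t₀ := fun x hx => lt_of_lt_of_le ht₁ hx.1
    have hFc : ContinuousOn (fun s => s ^ (1 + (1 - ε) * Θ s)) (Icc t₁ w) := by
      apply ContinuousOn.rpow continuousOn_id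
        (continuousOn_const.add (continuousOn_const.mul (hcont.mono hsub)))
      intro x hx
      exact Or.inl (by nlinarith [hx.1] : x ≠ 0)
    have hmem : w ∈ Icc ((fun s => s ^ (1 + (1 - ε) * Θ s)) t₁)
        ((fun s => s ^ (1 + (1 - ε) * Θ s)) w) := by
      constructor
      · exact le_trans (le_max_left _ _) hw
      · have hw1 : (1:ℝ) ≤ w := le_trans ht₁1.le hwt₁
        have hΘw : 0 < Θ w := hpos w (le_trans ht₁.le hwt₁)
        calc w = w ^ (1:ℝ) := (Real.rpow_one w).symm
          _ ≤ w ^ (1 + (1 - ε) * Θ w) :=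
            Real.rpow_le_rpow_of_exponent_le hw1 (by nlinarith)
    obtain ⟨s, hs, hFs⟩ := intermediate_value_Icc hwt₁ hFc hmem
    exact ⟨s, hs.1, hFs⟩
  -- limit of the majorant
  have hA : Tendsto (fun t => (1 - ε) *
      ((Real.log t) ^ (β * Θ (Real.log t)) * Θ t)) atTop atTop :=
    hderyck.const_mul_atTop h1ε
  have hG : Tendsto (fun t => 10 / ((1 - ε) *
      ((Real.log t) ^ (β * Θ (Real.log t)) * Θ t))) atTop (nhds 0) :=
    tendsto_const_nhds.div_atTop hA
  set W : ℝ := max (max (t₁ ^ (1 + (1 - ε) * Θ t₁)) t₁) (max t₀ (S₁ ^ (1 + C₀)))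
    with hWdef
  have main : ∀ᶠ t in atTop,
      0 ≤ (10 * g (Real.log t) / Real.log t) / ((1 - ε) * Θ t) ∧
      (10 * g (Real.log t) / Real.log t) / ((1 - ε) * Θ t) ≤
        10 / ((1 - ε) * ((Real.log t) ^ (β * Θ (Real.log t)) * Θ t)) := by
    filter_upwards [eventually_ge_atTop t₀, tendsto_log_atTop.eventually_ge_atTop W]
      with t htt₀ htW
    set w : ℝ := Real.log t with hwdef
    have hθt : 0 < Θ t := hpos t htt₀
    obtain ⟨s, hst₁, hFs⟩ := hF w (le_trans (le_max_left _ _) htW)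
    have hwt₀ : t₀ ≤ w := le_trans (le_trans (le_max_left _ _) (le_max_right _ _)) htW
    have hwS : S₁ ^ (1 + C₀) ≤ w :=
      le_trans (le_trans (le_max_right _ _) (le_max_right _ _)) htW
    have hst₀ : t₀ ≤ s := le_trans ht₁.le hst₁
    have hs1 : 1 < s := lt_of_lt_of_le ht₀ hst₀
    have hs0 : 0 < s := lt_trans one_pos hs1
    have hθs : 0 < Θ s := hpos s hst₀
    have hw1 : 1 < w := lt_of_lt_of_le ht₀ hwt₀
    have hw0 : 0 < w := lt_trans one_pos hw1
    have hθw : 0 < Θ w := hpos w hwt₀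
    have hgw : g w = s := by rw [← hFs]; exact hg s hst₀
    have hsw : s ≤ w := by
      calc s = s ^ (1:ℝ) := (Real.rpow_one s).symm
        _ ≤ s ^ (1 + (1 - ε) * Θ s) :=
          Real.rpow_le_rpow_of_exponent_le hs1.le (by nlinarith)
        _ = w := hFs
    have hθsw : Θ w ≤ Θ s := hanti hst₀ hwt₀ hsw
    -- s is large, so Θ s < c
    have hθsC₀ : Θ s ≤ C₀ := hanti ht₁.le hst₀ hst₁
    have hsC : w ≤ s ^ (1 + C₀) := by
      rw [← hFs]
      exact Real.rpow_le_rpow_of_exponent_le hs1.le (by nlinarith)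
    have hS₁s : S₁ ≤ s := by
      by_contra hcon
      push_neg at hcon
      have : s ^ (1 + C₀) < S₁ ^ (1 + C₀) :=
        Real.rpow_lt_rpow hs0.le hcon h1C₀
      linarith
    have hθsc : Θ s < c := hS₁' s (le_trans (le_max_left _ _) hS₁s)
    -- log estimates
    have hlogs : 0 < Real.log s := Real.log_pos hs1
    have hlogw0 : 0 < Real.log w := Real.log_pos hw1
    have hlogw : Real.log w = (1 + (1 - ε) * Θ s) * Real.log s := by
      rw [← hFs, Real.log_rpow hs0]
    have hβlog : β * Real.log w ≤ (1 - ε) * Real.log s := by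
      rw [hlogw]
      have hb1 : β * Θ s ≤ (1 - β) / 2 := by
        linarith [mul_le_mul_of_nonneg_left hθsc.le hβ.le]
      have hb2 : β * ((1 - ε) * Θ s) ≤ β * Θ s := by
        nlinarith [mul_pos (mul_pos hε hβ) hθs]
      have h' : β * (1 + (1 - ε) * Θ s) ≤ 1 - ε := by nlinarith [hb1, hb2]
      calc β * ((1 + (1 - ε) * Θ s) * Real.log s)
          = (β * (1 + (1 - ε) * Θ s)) * Real.log s := by ring
        _ ≤ (1 - ε) * Real.log s := mul_le_mul_of_nonneg_right h' hlogs.le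
    have hkey : β * Θ w * Real.log w ≤ (1 - ε) * Θ s * Real.log s := by
      calc β * Θ w * Real.log w = Θ w * (β * Real.log w) := by ring
        _ ≤ Θ s * ((1 - ε) * Real.log s) :=
          mul_le_mul hθsw hβlog (mul_nonneg hβ.le hlogw0.le) hθs.le
        _ = (1 - ε) * Θ s * Real.log s := by ring
    have hrpow : w ^ (β * Θ w) ≤ s ^ ((1 - ε) * Θ s) := by
      rw [Real.rpow_def_of_pos hw0, Real.rpow_def_of_pos hs0]
      apply Real.exp_le_exp.mpr
      calc Real.log w * (β * Θ w) = β * Θ w * Real.log w := by ring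
        _ ≤ (1 - ε) * Θ s * Real.log s := hkey
        _ = Real.log s * ((1 - ε) * Θ s) := by ring
    have hsp : 0 < s ^ ((1 - ε) * Θ s) := Real.rpow_pos_of_pos hs0 _
    have hwp : 0 < w ^ (β * Θ w) := Real.rpow_pos_of_pos hw0 _
    have hsplit : w = s * s ^ ((1 - ε) * Θ s) := by
      rw [← hFs, Real.rpow_add hs0, Real.rpow_one]
    have hnum : 10 * g w / w = 10 / s ^ ((1 - ε) * Θ s) := by
      rw [hgw, hsplit]
      field_simp
    constructor
    · rw [hgw]
      exact div_nonneg (div_nonneg (mul_nonneg (by norm_num) hs0.le) hw0.le)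
        (mul_nonneg h1ε.le hθt.le)
    · rw [hnum, div_div]
      have hle : (1 - ε) * (w ^ (β * Θ w) * Θ t) ≤
          s ^ ((1 - ε) * Θ s) * ((1 - ε) * Θ t) := by
        calc (1 - ε) * (w ^ (β * Θ w) * Θ t)
            = w ^ (β * Θ w) * ((1 - ε) * Θ t) := by ring
          _ ≤ s ^ ((1 - ε) * Θ s) * ((1 - ε) * Θ t) :=
            mul_le_mul_of_nonneg_right hrpow (mul_nonneg h1ε.le hθt.le)
      exact div_le_div_of_nonneg_left (by norm_num)
        (mul_pos h1ε (mul_pos hwp hθt)) hle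
  exact squeeze_zero' (main.mono fun t h => h.1) (main.mono fun t h => h.2) hG
end
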